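/- Let n, k be integers with k even, 0 < k, and k < n/2. Then there exists a set P ⊂ ℝⁿ of k-sparse vectors with |P| = (n/k)^(k/4) (rounded down) such that ‖x - x'‖² ≥ 1/2 for all distinct x, x' ∈ P, and each x ∈ P has unit norm with entries in {0, ±1/√k}. -/

import Mathlib

open Finset Function

/-!
Put `m = ⌊n/k⌋` and reserve `k` disjoint blocks of `m` coordinates. A word `w` of length `k` over
the alphabet `[m] × {±1}` becomes the vector with entry `±1/√k` at the chosen position of each
block; words differing in `d` letters give vectors at squared distance at least `2d/k`. It thus
suffices to find `⌊(n/k)^(k/4)⌋` words pairwise differing in more than `k/4` letters, and the greedy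
(Gilbert–Varshamov) argument supplies them: with `q = 2m ≥ 4`, a Hamming ball of radius `k/4` has
at most `2^k q^(k/4) ≤ q^(k/2 + k/4)` points, and `(n/k)^(k/4) ≤ q^(k/4)`.
-/

theorem exists_card_eq_pairwise_not_rel {α : Type*} [Fintype α] [DecidableEq α]
    (R : α → α → Prop) [DecidableRel R] (hsymm : ∀ a b, R a b → R b a) (hrefl : ∀ a, R a a)
    {V : ℕ} (hV : 0 < V) (hball : ∀ a, #{b | R a b} ≤ V) (M : ℕ) (hM : M * V ≤ Fintype.card α) :
    ∃ S : Finset α, #S = M ∧ (S : Set α).Pairwise fun a b => ¬ R a b := by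
  induction M with
  | zero => exact ⟨∅, by simp⟩
  | succ M ih =>
    obtain ⟨S, rfl, hS⟩ := ih (by nlinarith)
    have hcover : #(S.biUnion fun a => {b | R a b}) < #(univ : Finset α) := calc
      _ ≤ ∑ a ∈ S, #{b | R a b} := card_biUnion_le
      _ ≤ #S * V := by simpa using sum_le_card_nsmul S _ V fun a _ => hball a
      _ < #(univ : Finset α) := by rw [card_univ]; nlinarith
    obtain ⟨b, -, hb⟩ := exists_mem_notMem_of_card_lt_card hcover
    simp only [mem_biUnion, mem_filter, mem_univ, true_and, not_exists, not_and] at hb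
    refine ⟨insert b S, card_insert_of_notMem fun h => hb b h (hrefl b), ?_⟩
    rw [coe_insert, Set.pairwise_insert]
    exact ⟨hS, fun a ha _ => ⟨fun h => hb a ha (hsymm _ _ h), hb a ha⟩⟩

theorem card_filter_hammingDist_le {ι β : Type*} [Fintype ι] [Fintype β] [DecidableEq ι]
    [DecidableEq β] [Nonempty β] (w : ι → β) (s : ℕ) :
    #{y | hammingDist y w ≤ s} ≤ 2 ^ Fintype.card ι * Fintype.card β ^ s := by
  have hcover : ({y | hammingDist y w ≤ s} : Finset (ι → β)) ⊆
      ({T | #T ≤ s} : Finset (Finset ι)).biUnion fun T =>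
        Fintype.piFinset fun i => if i ∈ T then univ else {w i} := by
    intro y hy
    simp only [mem_filter, mem_univ, true_and] at hy
    refine mem_biUnion.2 ⟨({i | y i ≠ w i} : Finset ι), by simpa [hammingDist] using hy, ?_⟩
    simp only [Fintype.mem_piFinset]
    intro i
    by_cases h : y i = w i <;> simp [h]
  calc #{y | hammingDist y w ≤ s}
      ≤ ∑ T ∈ {T : Finset ι | #T ≤ s}, ∏ i, #(if i ∈ T then univ else {w i}) := by
        simpa only [Fintype.card_piFinset] using (card_le_card hcover).trans card_biUnion_le
    _ ≤ ∑ T ∈ {T : Finset ι | #T ≤ s}, Fintype.card β ^ s := by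
        refine sum_le_sum fun T hT => ?_
        simp only [apply_ite card, card_univ, card_singleton, prod_ite_mem, univ_inter,
          prod_const]
        exact pow_le_pow_right₀ Fintype.card_pos (mem_filter.1 hT).2
    _ ≤ 2 ^ Fintype.card ι * Fintype.card β ^ s := by
        rw [sum_const, smul_eq_mul]
        gcongr
        exact (card_filter_le _ _).trans_eq (by simp)

theorem exists_card_eq_pairwise_lt_hammingDist {ι β : Type*} [Fintype ι] [Fintype β]
    [DecidableEq ι] [DecidableEq β] [Nonempty β] {M s : ℕ}
    (h : M * (2 ^ Fintype.card ι * Fintype.card β ^ s) ≤ Fintype.card β ^ Fintype.card ι) :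
    ∃ C : Finset (ι → β), #C = M ∧
      (C : Set (ι → β)).Pairwise fun w w' => s < hammingDist w w' := by
  obtain ⟨C, hC, hsep⟩ := exists_card_eq_pairwise_not_rel (α := ι → β)
    (V := 2 ^ Fintype.card ι * Fintype.card β ^ s) (fun w w' => hammingDist w w' ≤ s)
    (fun w w' h => by rwa [hammingDist_comm]) (fun w => by simp) (by positivity)
    (fun w => by simpa only [hammingDist_comm w] using card_filter_hammingDist_le w s) M
    (by rwa [Fintype.card_fun])
  exact ⟨C, hC, hsep.mono' fun _ _ => not_le.1⟩

section SignedBasis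

variable {κ : Type*} [DecidableEq κ]

def signedBasis (c : κ × ℤˣ) : κ → ℝ := Pi.single c.1 ((c.2 : ℤ) : ℝ)

lemma sq_intCast_units (u : ℤˣ) : ((u : ℤ) : ℝ) ^ 2 = 1 := by
  rcases Int.units_eq_one_or u with rfl | rfl <;> norm_num

lemma sum_sq_signedBasis [Fintype κ] (c : κ × ℤˣ) : ∑ a, signedBasis c a ^ 2 = 1 := by
  simp [signedBasis, Pi.single_apply, apply_ite (· ^ 2), sq_intCast_units]

lemma two_le_sum_sq_sub_signedBasis [Fintype κ] {c c' : κ × ℤˣ} (h : c ≠ c') :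
    2 ≤ ∑ a, (signedBasis c a - signedBasis c' a) ^ 2 := by
  obtain ⟨a, u⟩ := c
  obtain ⟨a', u'⟩ := c'
  by_cases ha : a = a'
  · subst ha
    have hu : u = -u' := Int.units_ne_iff_eq_neg.1 fun hu => h (by rw [hu])
    calc (2 : ℝ) ≤ (signedBasis (a, u) a - signedBasis (a, u') a) ^ 2 := by
          simp only [signedBasis, hu, Units.val_neg, Int.cast_neg, Pi.single_eq_same]
          nlinarith [sq_intCast_units u']
      _ ≤ _ := single_le_sum (f := fun b => (signedBasis (a, u) b - signedBasis (a, u') b) ^ 2)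
          (fun _ _ => sq_nonneg _) (mem_univ a)
  · calc (2 : ℝ) = ∑ b ∈ {a, a'}, (signedBasis (a, u) b - signedBasis (a', u') b) ^ 2 := by
          simp only [signedBasis, sum_pair ha, Pi.single_eq_same, Pi.single_eq_of_ne ha,
            Pi.single_eq_of_ne (Ne.symm ha), sub_zero, zero_sub, even_two, Even.neg_pow,
            sq_intCast_units]
          norm_num
      _ ≤ _ := sum_le_sum_of_subset_of_nonneg (subset_univ _) fun _ _ _ => sq_nonneg _

lemma signedBasis_mem (c : κ × ℤˣ) (a : κ) : signedBasis c a ∈ ({0, 1, -1} : Set ℝ) := by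
  rcases Int.units_eq_one_or c.2 with hu | hu <;>
    by_cases ha : a = c.1 <;> simp [signedBasis, ha, hu]

section CodeVec

variable {ι : Type*} [Fintype ι]

noncomputable def codeVec (w : ι → κ × ℤˣ) : ι × κ → ℝ :=
  fun p => signedBasis (w p.1) p.2 / √(Fintype.card ι)

lemma sum_sq_codeVec [Fintype κ] [Nonempty ι] (w : ι → κ × ℤˣ) : ∑ p, codeVec w p ^ 2 = 1 := by
  simp only [codeVec, div_pow, Real.sq_sqrt (Nat.cast_nonneg _), Fintype.sum_prod_type,
    ← sum_div, sum_sq_signedBasis, sum_const, card_univ, nsmul_one]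
  exact div_self (Nat.cast_ne_zero.2 Fintype.card_ne_zero)

lemma two_mul_hammingDist_div_le_sum_sq_sub_codeVec [Fintype κ] (w w' : ι → κ × ℤˣ) :
    2 * hammingDist w w' / (Fintype.card ι : ℝ) ≤ ∑ p, (codeVec w p - codeVec w' p) ^ 2 := by
  simp only [codeVec, ← sub_div, div_pow, Real.sq_sqrt (Nat.cast_nonneg _), Fintype.sum_prod_type,
    ← sum_div]
  gcongr
  rw [hammingDist, ← sum_boole, mul_sum]
  refine sum_le_sum fun i _ => ?_
  split_ifs with h
  · simpa using two_le_sum_sq_sub_signedBasis h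
  · simpa using sum_nonneg fun _ _ => sq_nonneg _

lemma ncard_support_codeVec_le (w : ι → κ × ℤˣ) :
    {p | codeVec w p ≠ 0}.ncard ≤ Fintype.card ι := by
  have hsub : {p | codeVec w p ≠ 0} ⊆ Set.range fun i => (i, (w i).1) := by
    rintro ⟨i, a⟩ hp
    by_contra ha
    refine hp ?_
    simp only [codeVec, signedBasis]
    rw [Pi.single_eq_of_ne fun h => ha ⟨i, by rw [h]⟩, zero_div]
  calc _ ≤ (Set.range fun i => (i, (w i).1)).ncard := Set.ncard_le_ncard hsub
    _ ≤ (Set.univ : Set ι).ncard := by rw [← Set.image_univ]; exact Set.ncard_image_le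
    _ = Fintype.card ι := by rw [Set.ncard_univ, Nat.card_eq_fintype_card]

lemma codeVec_mem (w : ι → κ × ℤˣ) (p : ι × κ) :
    codeVec w p ∈ ({0, 1 / √(Fintype.card ι), -(1 / √(Fintype.card ι))} : Set ℝ) := by
  rcases signedBasis_mem (w p.1) p.2 with h | h | h <;> simp_all [codeVec, neg_div]

end CodeVec

end SignedBasis

section ExtendByZero

variable {α β γ : Type*} [Zero γ] {e : α → β}

lemma Function.Injective.sum_extend_zero [Fintype α] [Fintype β] {M : Type*} [AddCommMonoid M]
    (he : Injective e) (F : γ → γ → M) (hF : F 0 0 = 0) (f f' : α → γ) :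
    ∑ b, F (extend e f 0 b) (extend e f' 0 b) = ∑ a, F (f a) (f' a) :=
  (Fintype.sum_of_injective e he _ _ (fun b hb => by simp [extend_apply' _ _ _ hb, hF])
    fun a => by simp [he.extend_apply]).symm

lemma ncard_support_extend_zero_le [Finite α] (f : α → γ) :
    {b | extend e f 0 b ≠ 0}.ncard ≤ {a | f a ≠ 0}.ncard := by
  classical
  have hsub : {b | extend e f 0 b ≠ 0} ⊆ e '' {a | f a ≠ 0} := by
    intro b hb
    rw [Set.mem_ofPred_eq, extend_def] at hb
    split_ifs at hb with h
    exacts [⟨_, hb, h.choose_spec⟩, absurd rfl hb]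
  exact (Set.ncard_le_ncard hsub (Set.toFinite _)).trans Set.ncard_image_le

lemma extend_zero_mem {S : Set γ} (h0 : (0 : γ) ∈ S) {f : α → γ} (hf : ∀ a, f a ∈ S) (b : β) :
    extend e f 0 b ∈ S := by
  classical
  rw [extend_def]
  split_ifs
  exacts [hf _, h0]

end ExtendByZero

lemma le_two_mul_floor {x : ℝ} (hx : 1 ≤ x) : x ≤ 2 * ⌊x⌋₊ := by
  have := Nat.lt_floor_add_one x
  have : (1 : ℝ) ≤ ⌊x⌋₊ := by exact_mod_cast Nat.one_le_floor_iff _ |>.2 hx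
  linarith

lemma floor_rpow_mul_le_pow {x : ℝ} {q : ℕ} (hx : 0 ≤ x) (hxq : x ≤ q) (hq : 4 ≤ q) (k : ℕ) :
    ⌊x ^ ((k : ℝ) / 4)⌋₊ * (2 ^ k * q ^ (k / 4)) ≤ q ^ k := by
  have hq1 : (1 : ℝ) ≤ q := by exact_mod_cast (by omega : 1 ≤ q)
  have hfloor : (⌊x ^ ((k : ℝ) / 4)⌋₊ : ℝ) ≤ (q : ℝ) ^ ((k : ℝ) / 4) :=
    (Nat.floor_le (by positivity)).trans (Real.rpow_le_rpow hx hxq (by positivity))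
  have htwo : (2 : ℝ) ^ k ≤ (q : ℝ) ^ ((k : ℝ) / 2) := by
    calc (2 : ℝ) ^ k = (4 : ℝ) ^ ((k : ℝ) / 2) := by
          rw [show (4 : ℝ) = 2 ^ (2 : ℝ) by norm_num, ← Real.rpow_mul (by norm_num),
            mul_div_cancel₀ (k : ℝ) two_ne_zero, Real.rpow_natCast]
      _ ≤ _ := Real.rpow_le_rpow (by norm_num) (by exact_mod_cast hq) (by positivity)
  have hrad : (q : ℝ) ^ (k / 4) ≤ (q : ℝ) ^ ((k : ℝ) / 4) := by
    rw [← Real.rpow_natCast]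
    exact Real.rpow_le_rpow_of_exponent_le hq1 Nat.cast_div_le
  rw [← Nat.cast_le (α := ℝ)]
  push_cast
  calc _ ≤ (q : ℝ) ^ ((k : ℝ) / 4) * ((q : ℝ) ^ ((k : ℝ) / 2) * (q : ℝ) ^ ((k : ℝ) / 4)) := by
        gcongr
    _ = (q : ℝ) ^ k := by
        rw [← Real.rpow_add (by positivity), ← Real.rpow_add (by positivity),
          ← Real.rpow_natCast]
        ring_nf

theorem exists_sparse_packing_of_code {ι κ β : Type*} [Fintype ι] [Nonempty ι] [Fintype κ]
    [DecidableEq κ] [Fintype β] (e : ι × κ ↪ β) (C : Finset (ι → κ × ℤˣ))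
    (hC : (C : Set (ι → κ × ℤˣ)).Pairwise fun w w' => Fintype.card ι ≤ 4 * hammingDist w w') :
    ∃ P : Finset (β → ℝ), #P = #C ∧
      (∀ x ∈ P, ∀ x' ∈ P, x ≠ x' → (1 : ℝ) / 2 ≤ ∑ j, (x j - x' j) ^ 2) ∧
      ∀ x ∈ P, {j | x j ≠ 0}.ncard ≤ Fintype.card ι ∧
        (∀ j, x j ∈ ({0, 1 / √(Fintype.card ι), -(1 / √(Fintype.card ι))} : Set ℝ)) ∧
        ∑ j, x j ^ 2 = 1 := by
  classical
  let x (w : ι → κ × ℤˣ) : β → ℝ := extend e (codeVec w) 0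
  have hsep : ∀ w ∈ C, ∀ w' ∈ C, w ≠ w' → (1 : ℝ) / 2 ≤ ∑ j, (x w j - x w' j) ^ 2 := by
    intro w hw w' hw' hne
    rw [e.injective.sum_extend_zero (fun a b => (a - b) ^ 2) (by simp)]
    refine le_trans ?_ (two_mul_hammingDist_div_le_sum_sq_sub_codeVec w w')
    have : (Fintype.card ι : ℝ) ≤ 4 * hammingDist w w' := by exact_mod_cast hC hw hw' hne
    rw [le_div_iff₀ (by positivity)]
    linarith
  refine ⟨C.image x, ?_, ?_, ?_⟩
  · refine card_image_of_injOn fun w hw w' hw' hxx => ?_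
    by_contra hne
    have := hsep w hw w' hw' hne
    norm_num [hxx] at this
  · simp only [mem_image]
    rintro _ ⟨w, hw, rfl⟩ _ ⟨w', hw', rfl⟩ hne
    exact hsep w hw w' hw' fun h => hne (h ▸ rfl)
  · simp only [mem_image]
    rintro _ ⟨w, -, rfl⟩
    refine ⟨(ncard_support_extend_zero_le _).trans (ncard_support_codeVec_le w),
      extend_zero_mem (by simp) (codeVec_mem w), ?_⟩
    rw [e.injective.sum_extend_zero (fun a _ => a ^ 2) (by simp) _ (codeVec w)]
    exact sum_sq_codeVec w

theorem stmt_8_general (n k : ℕ) (hk : 0 < k) (hn : 2 * k < n) :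
    ∃ P : Finset (Fin n → ℝ),
      P.card = ⌊((n : ℝ) / k) ^ ((k : ℝ) / 4)⌋₊ ∧
      (∀ x ∈ P, ∀ x' ∈ P, x ≠ x' → (1 : ℝ) / 2 ≤ ∑ i, (x i - x' i) ^ 2) ∧
      (∀ x ∈ P,
        ({i | x i ≠ 0} : Set (Fin n)).ncard ≤ k ∧
        (∀ i, x i = 0 ∨ x i = 1 / Real.sqrt k ∨ x i = -(1 / Real.sqrt k)) ∧
        ∑ i, x i ^ 2 = 1) := by
  have hm : 2 ≤ n / k := (Nat.le_div_iff_mul_le hk).2 (by omega)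
  have : NeZero (n / k) := ⟨by omega⟩
  have : Nonempty (Fin k) := ⟨⟨0, hk⟩⟩
  obtain ⟨e⟩ : Nonempty (Fin k × Fin (n / k) ↪ Fin n) :=
    Function.Embedding.nonempty_of_card_le (by simpa using Nat.mul_div_le n k)
  have hnk : (n : ℝ) / k ≤ (Fintype.card (Fin (n / k) × ℤˣ) : ℕ) := by
    simpa [mul_comm, Nat.floor_div_eq_div] using le_two_mul_floor (x := (n : ℝ) / k)
      ((one_le_div₀ (by exact_mod_cast hk)).2 (by exact_mod_cast (by omega : k ≤ n)))
  obtain ⟨C, hC, hCsep⟩ := exists_card_eq_pairwise_lt_hammingDist (ι := Fin k)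
    (β := Fin (n / k) × ℤˣ) (s := k / 4)
    (by simpa using floor_rpow_mul_le_pow (by positivity) hnk (by simp; omega) k)
  obtain ⟨P, hP, hPsep, hPvec⟩ := exists_sparse_packing_of_code e C
    (hCsep.mono' fun w w' h => by simp only [Fintype.card_fin]; omega)
  refine ⟨P, hP.trans hC, hPsep, fun x hx => ?_⟩
  obtain ⟨hsupp, hentries, hnorm⟩ := hPvec x hx
  exact ⟨by simpa using hsupp, fun i => by simpa using hentries i, hnorm⟩

/-- For `k` even, `0 < k`, `k < n/2`, there is a packing set `P` of `k`-sparse vectors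
with `|P| = ⌊(n/k)^(k/4)⌋`, pairwise squared distances at least `1/2`, and each element a
unit-norm vector with entries in `{0, ±1/√k}`. -/
theorem stmt_8 (n k : ℕ) (hk : 0 < k) (hke : Even k) (hn : 2 * k < n) :
    ∃ P : Finset (Fin n → ℝ),
      P.card = ⌊((n : ℝ) / k) ^ ((k : ℝ) / 4)⌋₊ ∧
      (∀ x ∈ P, ∀ x' ∈ P, x ≠ x' → (1 : ℝ) / 2 ≤ ∑ i, (x i - x' i) ^ 2) ∧
      (∀ x ∈ P,
        ({i | x i ≠ 0} : Set (Fin n)).ncard ≤ k ∧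
        (∀ i, x i = 0 ∨ x i = 1 / Real.sqrt k ∨ x i = -(1 / Real.sqrt k)) ∧
        ∑ i, x i ^ 2 = 1) :=
  stmt_8_general n k hk hn
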